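/- Let X be a nonnegative random variable with essential supremum M < ∞, survival function S_X = 1 − F_X, g a distortion function, ϱ ≥ 0, and w₀, ξ real numbers satisfying w₀ − min{π^g(X), M} < ξ < w₀. Define ψ(π) = E^g[X] − π/(1+ϱ) − ∫_0^{w₀−π−ξ} g(S_X(y)) dy for π ∈ [0, w₀−ξ]. Assume ψ(π) > 0 for all π ∈ [0, w₀−ξ]. Set π̄ = inf{ π ∈ ℝ : g(S_X(w₀−π−ξ)) ≥ 1/(1+ϱ) }, π* = max{0, min{π̄, w₀−ξ}}, η* = w₀ − π* − ξ, and q* = max{ q ∈ [η*, M) : E^g[I_{η*,q}(X)] = π*/(1+ϱ) }. Then the ceded loss function I_{η*,q*} satisfies π^g(I_{η*,q*}(X)) = π*, and it is optimal for the problem sup_{I∈𝓘} ℙ( w₀ − X + I(X) − π^g(I(X)) ≥ ξ ): for every I ∈ 𝓘, ℙ( w₀ − X + I(X) − π^g(I(X)) ≥ ξ ) ≤ F_X(q*) = ℙ( w₀ − X + I_{η*,q*}(X) − π* ≥ ξ ). -/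

import Mathlib

/-!
Write `G = g ∘ S_X` and `t = 1/(1+ϱ)`. The threshold `π*` is where `G(w₀ − π − ξ)` crosses `t`,
so `G ≥ t` below `η*` and `G ≤ t` on `(η*, w₀ − ξ]`; hence for every `d ≤ w₀ − ξ`,
`∫_d^{η*} G ≥ (η* − d) t`. Since `E^g[I_{η,q}(X)] = ∫_η^q G`, positivity of `ψ(π*)` says
`E^g[I_{η*,M}(X)] > π* t`, and the intermediate value theorem yields the largest `q* < M` with
`E^g[I_{η*,q*}(X)] = π* t`. For a ceded `I` with premium `π`, the event of the problem is
`{X − I(X) ≤ d}` with `d = w₀ − π − ξ`. If it contained a loss `u > q*` (w.l.o.g. `d ≤ u ≤ M`),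
then `I` would dominate the layer `I_{d,u}`, and
`π t ≥ ∫_d^u G ≥ (η* − d) t + E^g[I_{η*,u}(X)] > (η* − d) t + π* t = π t`.
-/

open MeasureTheory

/-- A distortion function: increasing `g : [0,1] → [0,1]` with `g 0 = 0` and `g 1 = 1`. -/
def IsDistortion (g : ℝ → ℝ) : Prop :=
  MonotoneOn g (Set.Icc 0 1) ∧ (∀ x ∈ Set.Icc (0:ℝ) 1, g x ∈ Set.Icc (0:ℝ) 1) ∧
    g 0 = 0 ∧ g 1 = 1

/-- The cdf of a real random variable `Z` under `P`. -/
noncomputable def cdfOf {Ω : Type*} [MeasurableSpace Ω] (P : Measure Ω) (Z : Ω → ℝ) :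
    ℝ → ℝ := fun z => (P {ω | Z ω ≤ z}).toReal

/-- Distorted expectation `E^g[Z] = ∫_0^∞ g(1 − F_Z(z)) dz` of a nonnegative random
variable `Z`. -/
noncomputable def distExp {Ω : Type*} [MeasurableSpace Ω] (g : ℝ → ℝ) (P : Measure Ω)
    (Z : Ω → ℝ) : ℝ := ∫ z in Set.Ioi (0 : ℝ), g (1 - cdfOf P Z z)

/-- The ceded loss function `I_{η,q}`: `0` on `[0,η]`, `x − η` on `(η,q]`, `q − η` beyond. -/
noncomputable def Ifun (η q : ℝ) : ℝ → ℝ := fun x =>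
  if x ≤ η then 0 else if x ≤ q then x - η else q - η

/-- A ceded loss function: `I(0) = 0`, with both `I` and `x ↦ x − I(x)` increasing on
`[0,∞)`. -/
def IsCeded (I : ℝ → ℝ) : Prop :=
  I 0 = 0 ∧ MonotoneOn I (Set.Ici 0) ∧ MonotoneOn (fun x => x - I x) (Set.Ici 0)


open Set

section Distortion

variable {Ω : Type*} [MeasurableSpace Ω] (P : Measure Ω)

lemma cdfOf_nonneg (Z : Ω → ℝ) (z : ℝ) : 0 ≤ cdfOf P Z z := ENNReal.toReal_nonneg

lemma cdfOf_eq_zero_of_lt {Z : Ω → ℝ} (hZ : ∀ ω, 0 ≤ Z ω) {z : ℝ} (hz : z < 0) :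
    cdfOf P Z z = 0 := by
  have : {ω | Z ω ≤ z} = ∅ := eq_empty_of_forall_notMem fun ω h => (hz.trans_le (hZ ω)).not_ge h
  simp [cdfOf, this]

variable [IsProbabilityMeasure P]

lemma cdfOf_le_one (Z : Ω → ℝ) (z : ℝ) : cdfOf P Z z ≤ 1 :=
  ENNReal.toReal_le_of_le_ofReal zero_le_one (by simpa using prob_le_one)

lemma cdfOf_le_cdfOf {Z₁ Z₂ : Ω → ℝ} (h : ∀ ω, Z₁ ω ≤ Z₂ ω) {z₁ z₂ : ℝ} (hz : z₁ ≤ z₂) :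
    cdfOf P Z₂ z₁ ≤ cdfOf P Z₁ z₂ :=
  ENNReal.toReal_mono (measure_ne_top P _) (measure_mono fun ω hω => ((h ω).trans hω).trans hz)

lemma cdfOf_eq_one_of_ae_le {Z : Ω → ℝ} {b : ℝ} (hZ : ∀ᵐ ω ∂P, Z ω ≤ b) {z : ℝ} (hz : b ≤ z) :
    cdfOf P Z z = 1 := by
  have hnull : P {ω | Z ω ≤ z}ᶜ = 0 :=
    measure_mono_null (fun ω (hω : ¬ Z ω ≤ z) (h : Z ω ≤ b) => hω (h.trans hz)) (ae_iff.mp hZ)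
  simp [cdfOf, measure_congr (ae_eq_univ.mpr hnull)]

noncomputable def distSurvival (g : ℝ → ℝ) (Z : Ω → ℝ) : ℝ → ℝ :=
  fun z => g (1 - cdfOf P Z z)

variable {P} {g : ℝ → ℝ} (hg : IsDistortion g)
include hg

lemma distSurvival_mem_Icc (Z : Ω → ℝ) (z : ℝ) : distSurvival P g Z z ∈ Icc (0 : ℝ) 1 :=
  hg.2.1 _ ⟨by linarith [cdfOf_le_one P Z z], by linarith [cdfOf_nonneg P Z z]⟩

lemma distSurvival_le_distSurvival {Z₁ Z₂ : Ω → ℝ} (h : ∀ ω, Z₁ ω ≤ Z₂ ω) {z₁ z₂ : ℝ}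
    (hz : z₁ ≤ z₂) : distSurvival P g Z₁ z₂ ≤ distSurvival P g Z₂ z₁ :=
  hg.1 ⟨by linarith [cdfOf_le_one P Z₁ z₂], by linarith [cdfOf_nonneg P Z₁ z₂]⟩
    ⟨by linarith [cdfOf_le_one P Z₂ z₁], by linarith [cdfOf_nonneg P Z₂ z₁]⟩
    (by linarith [cdfOf_le_cdfOf P h hz])

lemma distSurvival_antitone (Z : Ω → ℝ) : Antitone (distSurvival P g Z) :=
  fun _ _ hz => distSurvival_le_distSurvival hg (fun _ => le_rfl) hz

lemma intervalIntegrable_distSurvival (Z : Ω → ℝ) (a b : ℝ) :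
    IntervalIntegrable (distSurvival P g Z) volume a b :=
  (distSurvival_antitone hg Z).intervalIntegrable

lemma distSurvival_eq_zero_of_ae_le {Z : Ω → ℝ} {b : ℝ} (hZ : ∀ᵐ ω ∂P, Z ω ≤ b) {z : ℝ}
    (hz : b ≤ z) : distSurvival P g Z z = 0 := by
  simp [distSurvival, cdfOf_eq_one_of_ae_le P hZ hz, hg.2.2.1]

omit [IsProbabilityMeasure P] in
lemma distSurvival_eq_one_of_neg {Z : Ω → ℝ} (hZ : ∀ ω, 0 ≤ Z ω) {z : ℝ} (hz : z < 0) :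
    distSurvival P g Z z = 1 := by
  simp [distSurvival, cdfOf_eq_zero_of_lt P hZ hz, hg.2.2.2]

lemma distExp_eq_intervalIntegral {Z : Ω → ℝ} {b : ℝ} (hZ : ∀ᵐ ω ∂P, Z ω ≤ b) (hb : 0 ≤ b) :
    distExp g P Z = ∫ z in 0..b, distSurvival P g Z z := by
  have hzero : EqOn (distSurvival P g Z) 0 (Ioi b) := fun z hz =>
    distSurvival_eq_zero_of_ae_le hg hZ (le_of_lt hz)
  change ∫ z in Ioi 0, distSurvival P g Z z = _
  rw [← Ioc_union_Ioi_eq_Ioi hb, setIntegral_union (Ioc_disjoint_Ioi le_rfl) measurableSet_Ioi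
    (intervalIntegrable_distSurvival hg Z 0 b).1
    (integrableOn_zero.congr_fun hzero.symm measurableSet_Ioi),
    setIntegral_congr_fun measurableSet_Ioi hzero, intervalIntegral.integral_of_le hb]
  simp

lemma distExp_sub_intervalIntegral {Z : Ω → ℝ} {b : ℝ} (hZ : ∀ᵐ ω ∂P, Z ω ≤ b) (hb : 0 ≤ b)
    (η : ℝ) :
    distExp g P Z - ∫ z in 0..η, distSurvival P g Z z = ∫ z in η..b, distSurvival P g Z z := by
  rw [distExp_eq_intervalIntegral hg hZ hb, ← intervalIntegral.integral_add_adjacent_intervals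
    (intervalIntegrable_distSurvival hg Z 0 η) (intervalIntegrable_distSurvival hg Z η b)]
  ring

lemma distExp_nonneg (Z : Ω → ℝ) : 0 ≤ distExp g P Z :=
  setIntegral_nonneg measurableSet_Ioi fun z _ => (distSurvival_mem_Icc hg Z z).1

lemma distExp_mono {Z₁ Z₂ : Ω → ℝ} (h : ∀ ω, Z₁ ω ≤ Z₂ ω) {b : ℝ} (hZ₂ : ∀ᵐ ω ∂P, Z₂ ω ≤ b) :
    distExp g P Z₁ ≤ distExp g P Z₂ := by
  have hb₂ : ∀ᵐ ω ∂P, Z₂ ω ≤ max b 0 := hZ₂.mono fun ω hω => hω.trans (le_max_left b 0)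
  have hb₁ : ∀ᵐ ω ∂P, Z₁ ω ≤ max b 0 := hb₂.mono fun ω hω => (h ω).trans hω
  rw [distExp_eq_intervalIntegral hg hb₁ (le_max_right b 0),
    distExp_eq_intervalIntegral hg hb₂ (le_max_right b 0)]
  exact intervalIntegral.integral_mono_on (le_max_right b 0)
    (intervalIntegrable_distSurvival hg Z₁ _ _) (intervalIntegrable_distSurvival hg Z₂ _ _)
    fun z _ => distSurvival_le_distSurvival hg h le_rfl

end Distortion

lemma Ifun_le {η q : ℝ} (hηq : η ≤ q) (x : ℝ) : Ifun η q x ≤ q - η := by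
  unfold Ifun; split_ifs <;> linarith

lemma Ifun_le_iff {η q x z : ℝ} (hz₀ : 0 ≤ z) (hz : z < q - η) :
    Ifun η q x ≤ z ↔ x ≤ z + η := by
  unfold Ifun; split_ifs <;> constructor <;> intro <;> linarith

lemma sub_Ifun_le_iff {η q : ℝ} (hηq : η ≤ q) (x : ℝ) : x - Ifun η q x ≤ η ↔ x ≤ q := by
  unfold Ifun; split_ifs <;> constructor <;> intro <;> linarith

namespace IsCeded

variable {I : ℝ → ℝ} (hI : IsCeded I)
include hI

lemma nonneg {x : ℝ} (hx : 0 ≤ x) : 0 ≤ I x := by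
  simpa [hI.1] using hI.2.1 self_mem_Ici hx hx

lemma le_self {x : ℝ} (hx : 0 ≤ x) : I x ≤ x := by
  have := hI.2.2 self_mem_Ici hx hx
  simp only [hI.1, sub_zero] at this
  linarith

lemma Ifun_le {d u x : ℝ} (hu₀ : 0 ≤ u) (hu : u - I u ≤ d) (hx : 0 ≤ x) : Ifun d u x ≤ I x := by
  unfold Ifun
  split_ifs with hxd hxu
  · exact hI.nonneg hx
  · have := hI.2.2 hx hu₀ hxu
    simp only at this
    linarith
  · have := hI.2.1 hu₀ hx (le_of_not_ge hxu)
    linarith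

end IsCeded

section Layer

variable {Ω : Type*} [MeasurableSpace Ω] {P : Measure Ω} [IsProbabilityMeasure P]
  {g : ℝ → ℝ} (hg : IsDistortion g)
include hg

lemma distExp_Ifun (X : Ω → ℝ) {η q : ℝ} (hηq : η ≤ q) :
    distExp g P (fun ω => Ifun η q (X ω)) = ∫ y in η..q, distSurvival P g X y := by
  have hqη : 0 ≤ q - η := sub_nonneg.mpr hηq
  have hcdf : EqOn (distSurvival P g (fun ω => Ifun η q (X ω)))
      (fun z => distSurvival P g X (z + η)) (Ioo 0 (q - η)) := fun z hz => by
    simp only [distSurvival, cdfOf, Ifun_le_iff hz.1.le hz.2]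
  rw [distExp_eq_intervalIntegral hg (ae_of_all _ fun ω => Ifun_le hηq (X ω)) hqη,
    intervalIntegral.integral_congr_Ioo_of_le hqη hcdf,
    intervalIntegral.integral_comp_add_right (distSurvival P g X), zero_add, sub_add_cancel]

end Layer

section Real

variable {G : ℝ → ℝ} {t a : ℝ}

lemma le_of_lt_sub_csInf (hG : Antitone G) (hS : {π | t ≤ G (a - π)}.Nonempty) {y : ℝ}
    (hy : y < a - sInf {π | t ≤ G (a - π)}) : t ≤ G y := by
  obtain ⟨π, hπ, hπy⟩ := exists_lt_of_csInf_lt hS (by linarith : sInf _ < a - y)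
  exact hπ.trans (hG (by linarith))

lemma lt_of_sub_csInf_lt (hS : BddBelow {π | t ≤ G (a - π)}) {y : ℝ}
    (hy : a - sInf {π | t ≤ G (a - π)} < y) : G y < t := by
  by_contra! hty
  have : sInf {π | t ≤ G (a - π)} ≤ a - y := csInf_le hS (by simpa using hty)
  linarith

lemma Antitone.crossing_of_eq_max_min_csInf (hG : Antitone G) (ha : 0 ≤ a)
    (hG₀ : ∀ y < 0, t ≤ G y) (hlow : ∃ y, G y < t) {π : ℝ}
    (hπ : π = max 0 (min (sInf {π | t ≤ G (a - π)}) a)) :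
    π ∈ Icc 0 a ∧ (∀ y < a - π, t ≤ G y) ∧ ∀ y ∈ Ioc (a - π) a, G y ≤ t := by
  set S := {π | t ≤ G (a - π)}
  have hmem : ∀ π, a < π → π ∈ S := fun π hπ => hG₀ _ (by linarith)
  have hne : S.Nonempty := ⟨a + 1, hmem _ (by linarith)⟩
  have hbdd : BddBelow S := by
    obtain ⟨y₀, hy₀⟩ := hlow
    refine ⟨a - y₀, fun π (hπ : t ≤ G (a - π)) => ?_⟩
    by_contra! h
    exact (hπ.trans (hG (by linarith))).not_gt hy₀
  have hSa : sInf S ≤ a :=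
    le_of_forall_pos_le_add fun ε hε => csInf_le hbdd (hmem _ (by linarith))
  rw [min_eq_left hSa] at hπ
  refine ⟨⟨hπ ▸ le_max_left _ _, hπ ▸ max_le ha hSa⟩, fun y hy =>
    le_of_lt_sub_csInf hG hne (by linarith [hπ ▸ le_max_right 0 (sInf S)]), fun y hy => ?_⟩
  have hπS : π = sInf S := by
    rw [hπ] at hy ⊢
    exact max_eq_right (by_contra fun h => by
      rw [max_eq_left (le_of_not_ge h)] at hy; linarith [hy.1, hy.2])
  exact (lt_of_sub_csInf_lt hbdd (hπS ▸ hy.1)).le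

lemma mul_le_intervalIntegral_of_crossing {f : ℝ → ℝ} {d η : ℝ}
    (hf : IntervalIntegrable f volume d η) (hge : ∀ y ∈ Ioo d η, t ≤ f y)
    (hle : ∀ y ∈ Ioo η d, f y ≤ t) : (η - d) * t ≤ ∫ y in d..η, f y := by
  rcases le_total d η with hdη | hηd
  · simpa [mul_comm] using intervalIntegral.integral_mono_on_of_le_Ioo hdη
      intervalIntegrable_const hf hge
  · have := intervalIntegral.integral_mono_on_of_le_Ioo hηd hf.symm intervalIntegrable_const hle
    rw [intervalIntegral.integral_symm]
    simp only [intervalIntegral.integral_const, smul_eq_mul] at this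
    linarith

lemma ContinuousOn.exists_isGreatest_level {f : ℝ → ℝ} {b c : ℝ} (hab : a ≤ b)
    (hf : ContinuousOn f (Icc a b)) (ha : f a ≤ c) (hb : c < f b) :
    ∃ q, IsGreatest {q | q ∈ Ico a b ∧ f q = c} q ∧ ∀ v ∈ Ioc q b, c < f v := by
  have hIVT : ∀ v ∈ Icc a b, f v ≤ c → ∃ w ∈ Icc v b, f w = c := fun v hv hv' =>
    intermediate_value_Icc hv.2 (hf.mono (Icc_subset_Icc_left hv.1)) ⟨hv', hb.le⟩
  have hL : IsCompact (Icc a b ∩ f ⁻¹' {c}) := isCompact_Icc.of_isClosed_subset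
    (hf.preimage_isClosed_of_isClosed isClosed_Icc isClosed_singleton) inter_subset_left
  obtain ⟨q, ⟨hqI, hqc : f q = c⟩, hqmax⟩ := hL.exists_isGreatest <| by
    obtain ⟨w, hw, hwc⟩ := hIVT a (left_mem_Icc.mpr hab) ha
    exact ⟨w, ⟨⟨hw.1, hw.2⟩, hwc⟩⟩
  have hqb : q < b := hqI.2.lt_of_ne fun h => hb.ne (h ▸ hqc.symm)
  refine ⟨q, ⟨⟨⟨hqI.1, hqb⟩, hqc⟩, fun p hp => hqmax ⟨Ico_subset_Icc_self hp.1, hp.2⟩⟩,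
    fun v hv => lt_of_not_ge fun hvc => ?_⟩
  obtain ⟨w, hw, hwc⟩ := hIVT v ⟨hqI.1.trans hv.1.le, hv.2⟩ hvc
  exact (hv.1.trans_le hw.1).not_ge (hqmax ⟨⟨hqI.1.trans (hv.1.le.trans hw.1), hw.2⟩, hwc⟩)

end Real

lemma exists_isGreatest_distExp_Ifun_eq {Ω : Type*} [MeasurableSpace Ω] {P : Measure Ω}
    [IsProbabilityMeasure P] {g : ℝ → ℝ} (hg : IsDistortion g) (X : Ω → ℝ) {η M c : ℝ}
    (hηM : η ≤ M) (hc₀ : 0 ≤ c) (hc : c < ∫ y in η..M, distSurvival P g X y) :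
    ∃ q, IsGreatest {q | q ∈ Ico η M ∧ distExp g P (fun ω => Ifun η q (X ω)) = c} q ∧
      ∀ v ∈ Ioc q M, c < ∫ y in η..v, distSurvival P g X y := by
  have hcont : ContinuousOn (fun q => ∫ y in η..q, distSurvival P g X y) (Icc η M) := by
    simpa only [uIcc_of_le hηM] using intervalIntegral.continuousOn_primitive_interval'
      (intervalIntegrable_distSurvival hg X η M) left_mem_uIcc
  have hlevel : {q | q ∈ Ico η M ∧ distExp g P (fun ω => Ifun η q (X ω)) = c}
      = {q | q ∈ Ico η M ∧ ∫ y in η..q, distSurvival P g X y = c} := by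
    ext q
    exact and_congr_right fun hq => by rw [distExp_Ifun hg X hq.1]
  rw [hlevel]
  exact hcont.exists_isGreatest_level hηM (by simpa using hc₀) hc

section Optimality

variable {Ω : Type*} [MeasurableSpace Ω] {P : Measure Ω} [IsProbabilityMeasure P]
  {X : Ω → ℝ} (hXnn : ∀ ω, 0 ≤ X ω) {M : ℝ} (hM : ∀ᵐ ω ∂P, X ω ≤ M)
  {g : ℝ → ℝ} (hg : IsDistortion g) {I : ℝ → ℝ} (hI : IsCeded I)
include hXnn hM hg hI

lemma IsCeded.le_of_retained_le_of_distExp_le {d η q c : ℝ} (hdM : d ≤ M) (hqM : q < M)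
    (hq : ∀ v ∈ Ioc q M, c < ∫ y in η..v, distSurvival P g X y)
    (hEI : distExp g P (fun ω => I (X ω)) ≤ (∫ y in d..η, distSurvival P g X y) + c)
    {x : ℝ} (hx : 0 ≤ x) (hxd : x - I x ≤ d) : x ≤ q := by
  by_contra! hqx
  have hd₀ : 0 ≤ d := (sub_nonneg.mpr (hI.le_self hx)).trans hxd
  set u := min (max x d) M
  have hdu : d ≤ u := le_min (le_max_right _ _) hdM
  have hmax : max x d - I (max x d) ≤ d := by
    rcases le_total x d with h | h
    · rw [max_eq_right h]; linarith [hI.nonneg hd₀]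
    · rwa [max_eq_left h]
  have hu : u - I u ≤ d :=
    (hI.2.2 (hd₀.trans hdu) (hd₀.trans (le_max_right _ _)) (min_le_left _ _)).trans hmax
  have hlayer : ∫ y in d..u, distSurvival P g X y ≤ distExp g P (fun ω => I (X ω)) := by
    rw [← distExp_Ifun hg X hdu]
    exact distExp_mono hg (fun ω => hI.Ifun_le (hd₀.trans hdu) hu (hXnn ω))
      (hM.mono fun ω hω => (hI.le_self (hXnn ω)).trans hω)
  rw [← intervalIntegral.integral_add_adjacent_intervals (intervalIntegrable_distSurvival hg X d η)
    (intervalIntegrable_distSurvival hg X η u)] at hlayer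
  linarith [hq u ⟨lt_min (lt_max_of_lt_left hqx) hqM, min_le_right _ _⟩]

lemma IsCeded.le_of_retained_le {κ a η q : ℝ} (hκ : 0 < κ) (haM : a < M)
    (hqM : q < M) (hge : ∀ y < η, 1 / κ ≤ distSurvival P g X y)
    (hle : ∀ y ∈ Ioc η a, distSurvival P g X y ≤ 1 / κ)
    (hq : ∀ v ∈ Ioc q M, (a - η) / κ < ∫ y in η..v, distSurvival P g X y) {x : ℝ} (hx : 0 ≤ x)
    (hxd : x - I x ≤ a - κ * distExp g P (fun ω => I (X ω))) : x ≤ q := by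
  set d := a - κ * distExp g P (fun ω => I (X ω))
  have hda : d ≤ a := sub_le_self a (mul_nonneg hκ.le (distExp_nonneg hg _))
  have hcross := mul_le_intervalIntegral_of_crossing (intervalIntegrable_distSurvival hg X d η)
    (fun y hy => hge y hy.2) (fun y hy => hle y ⟨hy.1, hy.2.le.trans hda⟩)
  have hEI : distExp g P (fun ω => I (X ω)) = (η - d) * (1 / κ) + (a - η) / κ := by
    simp only [d]; field_simp; ring
  exact hI.le_of_retained_le_of_distExp_le hXnn hM hg (hda.trans haM.le) hqM hq
    (by linarith) hx hxd

end Optimality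

theorem optimal_reinsurance_without_background_general {Ω : Type*} [MeasurableSpace Ω]
    (P : Measure Ω) [IsProbabilityMeasure P]
    (X : Ω → ℝ) (hXnn : ∀ ω, 0 ≤ X ω)
    (M : ℝ) (hMbound : ∀ᵐ ω ∂P, X ω ≤ M)
    (g : ℝ → ℝ) (hg : IsDistortion g)
    (ϱ : ℝ) (hϱ : 0 ≤ ϱ)
    (w₀ ξ : ℝ)
    (hξlb : w₀ - min ((1 + ϱ) * distExp g P X) M < ξ) (hξub : ξ < w₀)
    (hψpos : ∀ π ∈ Set.Icc (0 : ℝ) (w₀ - ξ),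
      0 < distExp g P X - π / (1 + ϱ) - ∫ y in (0 : ℝ)..(w₀ - π - ξ), g (1 - cdfOf P X y))
    (πb : ℝ) (hπb : πb = sInf {π : ℝ | 1 / (1 + ϱ) ≤ g (1 - cdfOf P X (w₀ - π - ξ))})
    (πs : ℝ) (hπs : πs = max 0 (min πb (w₀ - ξ)))
    (ηs : ℝ) (hηs : ηs = w₀ - πs - ξ) :
    ∃ qs : ℝ,
      IsGreatest {q : ℝ | q ∈ Set.Ico ηs M ∧
        distExp g P (fun ω => Ifun ηs q (X ω)) = πs / (1 + ϱ)} qs ∧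
      (1 + ϱ) * distExp g P (fun ω => Ifun ηs qs (X ω)) = πs ∧
      (∀ I : ℝ → ℝ, IsCeded I →
        (P {ω | ξ ≤ w₀ - X ω + I (X ω)
            - (1 + ϱ) * distExp g P (fun ω' => I (X ω'))}).toReal ≤ cdfOf P X qs) ∧
      cdfOf P X qs = (P {ω | ξ ≤ w₀ - X ω + Ifun ηs qs (X ω) - πs}).toReal := by
  set G := distSurvival P g X
  have hϱ₁ : 0 < 1 + ϱ := by linarith
  have ht₀ : 0 < 1 / (1 + ϱ) := by positivity
  have ht₁ : 1 / (1 + ϱ) ≤ 1 := by rw [div_le_one hϱ₁]; linarith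
  have hξM : w₀ - ξ < M := by linarith [min_le_right ((1 + ϱ) * distExp g P X) M]
  obtain ⟨⟨hπs₀, hπs_le⟩, hG_ge, hG_le⟩ :=
    (distSurvival_antitone hg X).crossing_of_eq_max_min_csInf (sub_nonneg.mpr hξub.le)
      (fun y hy => by rwa [distSurvival_eq_one_of_neg hg hXnn hy])
      ⟨M, (distSurvival_eq_zero_of_ae_le hg hMbound le_rfl).symm ▸ ht₀⟩
      (by simpa only [hπb, sub_right_comm, G, distSurvival] using hπs)
  have hηs' : ηs = w₀ - ξ - πs := by rw [hηs]; ring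
  rw [← hηs'] at hG_ge hG_le
  have hηsM : ηs < M := by linarith
  have hψ : πs / (1 + ϱ) < ∫ y in ηs..M, G y := by
    have h := hψpos πs ⟨hπs₀, hπs_le⟩
    rw [← hηs] at h
    change 0 < _ - _ - ∫ y in 0..ηs, G y at h
    linarith [distExp_sub_intervalIntegral hg hMbound (by linarith) ηs]
  obtain ⟨qs, hqs, hqs_lt⟩ :=
    exists_isGreatest_distExp_Ifun_eq hg X hηsM.le (div_nonneg hπs₀ hϱ₁.le) hψ
  refine ⟨qs, hqs, by rw [hqs.1.2]; field_simp, fun I hI => ?_, ?_⟩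
  · refine ENNReal.toReal_mono (measure_ne_top _ _) (measure_mono fun ω hω => ?_)
    exact hI.le_of_retained_le hXnn hMbound hg hϱ₁ hξM hqs.1.1.2 hG_ge hG_le
      (by simpa [hηs'] using hqs_lt) (hXnn ω) (by simp only [mem_ofPred_eq] at hω; linarith)
  · change (P {ω | X ω ≤ qs}).toReal = _
    congr 2
    ext ω
    simp only [mem_ofPred_eq, ← sub_Ifun_le_iff hqs.1.1.1]
    constructor <;> intro <;> linarith

/-- **Theorem 3.1(ii).** With `ψ(π) = E^g[X] − π/(1+ϱ) − ∫_0^{w₀−π−ξ} g(S_X(y)) dy`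
strictly positive on `[0, w₀−ξ]`, `π̄ = inf{π : g(S_X(w₀−π−ξ)) ≥ 1/(1+ϱ)}`,
`π* = max{0, min{π̄, w₀−ξ}}`, `η* = w₀ − π* − ξ`, and
`q* = max{q ∈ [η*, M) : E^g[I_{η*,q}(X)] = π*/(1+ϱ)}`, the ceded loss function `I_{η*,q*}`
has premium `π^g(I_{η*,q*}(X)) = π*` and is optimal for
`sup_{I∈𝓘} ℙ(w₀ − X + I(X) − π^g(I(X)) ≥ ξ)`, with optimal value `F_X(q*)`. -/
theorem optimal_reinsurance_without_background {Ω : Type*} [MeasurableSpace Ω]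
    (P : Measure Ω) [IsProbabilityMeasure P]
    (X : Ω → ℝ) (hX : Measurable X) (hXnn : ∀ ω, 0 ≤ X ω)
    (M : ℝ) (hMbound : ∀ᵐ ω ∂P, X ω ≤ M)
    (hMleast : ∀ M' : ℝ, (∀ᵐ ω ∂P, X ω ≤ M') → M ≤ M')
    (g : ℝ → ℝ) (hg : IsDistortion g)
    (ϱ : ℝ) (hϱ : 0 ≤ ϱ)
    (w₀ ξ : ℝ)
    (hξlb : w₀ - min ((1 + ϱ) * distExp g P X) M < ξ) (hξub : ξ < w₀)
    (hψpos : ∀ π ∈ Set.Icc (0 : ℝ) (w₀ - ξ),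
      0 < distExp g P X - π / (1 + ϱ) - ∫ y in (0 : ℝ)..(w₀ - π - ξ), g (1 - cdfOf P X y))
    (πb : ℝ) (hπb : πb = sInf {π : ℝ | 1 / (1 + ϱ) ≤ g (1 - cdfOf P X (w₀ - π - ξ))})
    (πs : ℝ) (hπs : πs = max 0 (min πb (w₀ - ξ)))
    (ηs : ℝ) (hηs : ηs = w₀ - πs - ξ) :
    ∃ qs : ℝ,
      IsGreatest {q : ℝ | q ∈ Set.Ico ηs M ∧
        distExp g P (fun ω => Ifun ηs q (X ω)) = πs / (1 + ϱ)} qs ∧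
      (1 + ϱ) * distExp g P (fun ω => Ifun ηs qs (X ω)) = πs ∧
      (∀ I : ℝ → ℝ, IsCeded I →
        (P {ω | ξ ≤ w₀ - X ω + I (X ω)
            - (1 + ϱ) * distExp g P (fun ω' => I (X ω'))}).toReal ≤ cdfOf P X qs) ∧
      cdfOf P X qs = (P {ω | ξ ≤ w₀ - X ω + Ifun ηs qs (X ω) - πs}).toReal :=
  optimal_reinsurance_without_background_general P X hXnn M hMbound g hg ϱ hϱ w₀ ξ hξlb hξub hψpos
    πb hπb πs hπs ηs hηs
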